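/- Let C' = (C'; C'_0; C'_1,...,C'_r) and C'' = (C''; C''_0; C''_1,...,C''_r) be two maximal P-decompositions of a linear code C ⊆ F_q^n, and let T ∈ GL_P(n) be a linear P-isometry with T(C') = C''. Then there is a permutation σ of {1,...,r} such that T(C'_i) = C''_{σ(i)} for every i. -/

import Mathlib

/-- `I` is an ideal of the poset `P` on `[n]`. -/
def IsPosetIdeal {n : ℕ} (P : PartialOrder (Fin n)) (I : Set (Fin n)) : Prop :=
  ∀ i ∈ I, ∀ j, P.le j i → j ∈ I

/-- The smallest ideal of `P` containing `X`. -/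
def idealGen {n : ℕ} (P : PartialOrder (Fin n)) (X : Set (Fin n)) : Set (Fin n) :=
  ⋂₀ {I | IsPosetIdeal P I ∧ X ⊆ I}

/-- The `P`-weight `ω_P(x) = |⟨supp(x)⟩|`. -/
noncomputable def posetWeight {F : Type*} [Field F] {n : ℕ} (P : PartialOrder (Fin n))
    (x : Fin n → F) : ℕ :=
  (idealGen P {i | x i ≠ 0}).ncard

/-- The `P`-distance `d_P(x,y) = ω_P(x - y)`. -/
noncomputable def posetDist {F : Type*} [Field F] {n : ℕ} (P : PartialOrder (Fin n))
    (x y : Fin n → F) : ℕ :=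
  posetWeight P (x - y)

/-- A linear `P`-isometry of `F_q^n`. -/
def IsPIsometry {F : Type*} [Field F] {n : ℕ} (P : PartialOrder (Fin n))
    (T : (Fin n → F) ≃ₗ[F] (Fin n → F)) : Prop :=
  ∀ x y, posetDist P (T x) (T y) = posetDist P x y

/-- The support of a subspace `D ⊆ F_q^n`. -/
def suppS {F : Type*} [Field F] {n : ℕ} (D : Submodule F (Fin n → F)) : Set (Fin n) :=
  {j | ∃ x ∈ D, x j ≠ 0}

/-- `C_0`: the subspace of all vectors vanishing on the support of `C`. -/
def coSupp {F : Type*} [Field F] {n : ℕ} (C : Submodule F (Fin n → F)) :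
    Submodule F (Fin n → F) where
  carrier := {x | ∀ j ∈ suppS C, x j = 0}
  add_mem' := by
    intro a b ha hb j hj
    simp only [Set.mem_setOf_eq] at ha hb ⊢
    rw [Pi.add_apply, ha j hj, hb j hj, add_zero]
  zero_mem' := by intro j _; rfl
  smul_mem' := by
    intro c a ha j hj
    simp only [Set.mem_setOf_eq] at ha ⊢
    rw [Pi.smul_apply, ha j hj, smul_zero]

/-- A decomposition `(C; C_0; C_1, …, C_r)` of a linear code `C ⊆ F_q^n`:
nonzero subspaces `C_1, …, C_r` with pairwise disjoint supports whose internal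
direct sum is `C`.  (The distinguished part `C_0 = coSupp C` is determined by `C`.) -/
structure Decomposition {F : Type*} [Field F] {n : ℕ} (C : Submodule F (Fin n → F)) where
  r : ℕ
  D : Fin r → Submodule F (Fin n → F)
  ne_bot : ∀ i, D i ≠ ⊥
  indep : iSupIndep D
  sup_eq : ⨆ i, D i = C
  disj : Pairwise fun i j => Disjoint (suppS (D i)) (suppS (D j))

/-- A `P`-decomposition of `C`: a decomposition of a code `C'` that is
`P`-equivalent to `C`. -/
structure PDecomposition {F : Type*} [Field F] {n : ℕ} (P : PartialOrder (Fin n))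
    (C : Submodule F (Fin n → F)) where
  C' : Submodule F (Fin n → F)
  T : (Fin n → F) ≃ₗ[F] (Fin n → F)
  isom : IsPIsometry P T
  image : Submodule.map (T : (Fin n → F) →ₗ[F] (Fin n → F)) C = C'
  dec : Decomposition C'

/-- A trivial `P`-decomposition of `C`: a single component, with
`|supp(C')| = |supp(C)|` and `|supp(C'_0)| = |supp(C_0)|`. -/
def PDecomposition.IsTrivial {F : Type*} [Field F] {n : ℕ} {P : PartialOrder (Fin n)}
    {C : Submodule F (Fin n → F)} (d : PDecomposition P C) : Prop :=
  d.dec.r = 1 ∧ (suppS d.C').ncard = (suppS C).ncard ∧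
    (suppS (coSupp d.C')).ncard = (suppS (coSupp C)).ncard

/-- A code is `P`-irreducible if it admits no non-trivial `P`-decomposition. -/
def PIrreducible {F : Type*} [Field F] {n : ℕ} (P : PartialOrder (Fin n))
    (C : Submodule F (Fin n → F)) : Prop :=
  ∀ d : PDecomposition P C, d.IsTrivial

/-- A `P`-decomposition is maximal if each of its components is `P`-irreducible. -/
def PDecomposition.IsMaximal {F : Type*} [Field F] {n : ℕ} {P : PartialOrder (Fin n)}
    {C : Submodule F (Fin n → F)} (d : PDecomposition P C) : Prop :=
  ∀ i, PIrreducible P (d.dec.D i)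

/-!
An isometry preserves the support size of a `P`-irreducible code: otherwise the image, viewed as a
one-component decomposition, would be a non-trivial `P`-decomposition. Hence the images `T(C'_i)`
have support sizes adding up to `|supp C'| ≤ |supp C''|` (the inequality by the same count for
`T⁻¹` applied to `C''`), while their supports cover `supp C''`; so these supports are pairwise
disjoint and the `T(C'_i)` form a second decomposition of `C''` into irreducible codes.
Decompositions into irreducibles with disjoint supports are unique: restricting an irreducible
component of one to the supports of the components of the other splits it into pieces with
disjoint supports, so it lies in a single component, and containment in both directions yields the
permutation.
-/

theorem exists_equiv_of_forall_exists_le {α ι κ : Type*} [PartialOrder α] {a : ι → α}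
    {b : κ → α} (ha : ∀ i i', a i ≤ a i' → i = i') (hb : ∀ j j', b j ≤ b j' → j = j')
    (hab : ∀ i, ∃ j, a i ≤ b j) (hba : ∀ j, ∃ i, b j ≤ a i) :
    ∃ σ : ι ≃ κ, ∀ i, a i = b (σ i) := by
  choose f hf using hab
  choose g hg using hba
  have hgf : ∀ i, g (f i) = i := fun i => (ha _ _ ((hf i).trans (hg (f i)))).symm
  have hfg : ∀ j, f (g j) = j := fun j => (hb _ _ ((hg j).trans (hf (g j)))).symm
  refine ⟨⟨f, g, hgf, hfg⟩, fun i => le_antisymm (hf i) ?_⟩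
  simpa only [Equiv.coe_fn_mk, hgf] using hg (f i)

open Function in
theorem Set.pairwise_disjoint_of_sum_ncard_le {α ι : Type*} [Finite α] [Fintype ι]
    (s : ι → Set α) (h : ∑ i, (s i).ncard ≤ (⋃ i, s i).ncard) : Pairwise (Disjoint on s) := by
  classical
  intro i j hij
  set u := ⋃ k ∈ Finset.univ.erase j, s k
  have hunion : ⋃ k, s k = s j ∪ u := by
    ext x
    simp only [Set.mem_iUnion, Set.mem_union, u, Finset.mem_erase, Finset.mem_univ, and_true]
    constructor
    · rintro ⟨k, hk⟩
      rcases eq_or_ne k j with rfl | hkj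
      exacts [Or.inl hk, Or.inr ⟨k, hkj, hk⟩]
    · rintro (hx | ⟨k, -, hk⟩)
      exacts [⟨j, hx⟩, ⟨k, hk⟩]
  have hsum := Finset.add_sum_erase Finset.univ (fun k => (s k).ncard) (Finset.mem_univ j)
  have hu : u.ncard ≤ ∑ k ∈ Finset.univ.erase j, (s k).ncard := Finset.set_ncard_biUnion_le _ _
  have hdisj : Disjoint (s j) u := by
    rw [← Set.ncard_union_eq_iff]
    have := Set.ncard_union_le (s j) u
    rw [hunion] at h
    omega
  exact (hdisj.mono_right (Set.subset_biUnion_of_mem (u := s)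
    (Finset.mem_coe.2 (Finset.mem_erase.2 ⟨hij, Finset.mem_univ i⟩)))).symm

section Supports

variable {F : Type*} [Field F] {n : ℕ} {ι : Type*}

def HasDisjointSupports (A : ι → Submodule F (Fin n → F)) : Prop :=
  Pairwise fun i j => Disjoint (suppS (A i)) (suppS (A j))

theorem support_subset_suppS {M : Submodule F (Fin n → F)} {x : Fin n → F} (hx : x ∈ M) :
    Function.support x ⊆ suppS M :=
  fun _ hj => ⟨x, hx, hj⟩

theorem suppS_mono {M N : Submodule F (Fin n → F)} (h : M ≤ N) : suppS M ⊆ suppS N :=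
  fun _ ⟨x, hx, hj⟩ => ⟨x, h hx, hj⟩

theorem notMem_suppS_iff {M : Submodule F (Fin n → F)} {j : Fin n} :
    j ∉ suppS M ↔ M ≤ LinearMap.ker (LinearMap.proj j) := by
  simp [suppS, SetLike.le_def]

theorem suppS_iSup {ι : Sort*} (A : ι → Submodule F (Fin n → F)) :
    suppS (⨆ i, A i) = ⋃ i, suppS (A i) := by
  ext j
  rw [← not_iff_not]
  simp only [notMem_suppS_iff, iSup_le_iff, Set.mem_iUnion, not_exists]

theorem suppS_coSupp (M : Submodule F (Fin n → F)) : suppS (coSupp M) = (suppS M)ᶜ := by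
  ext j
  refine ⟨fun ⟨x, hx, hxj⟩ hj => hxj (hx j hj), fun hj => ⟨Pi.single j 1, ?_, by simp⟩⟩
  intro k hk
  have hkj : k ≠ j := fun h => hj (h ▸ hk)
  exact Pi.single_eq_of_ne hkj 1

theorem ncard_suppS_coSupp (M : Submodule F (Fin n → F)) :
    (suppS (coSupp M)).ncard = n - (suppS M).ncard := by
  rw [suppS_coSupp, Set.ncard_compl, Nat.card_fin]

theorem disjoint_of_disjoint_suppS {M N : Submodule F (Fin n → F)}
    (h : Disjoint (suppS M) (suppS N)) : Disjoint M N := by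
  rw [Submodule.disjoint_def]
  intro x hxM hxN
  funext j
  by_contra hj
  exact Set.disjoint_left.1 h ⟨x, hxM, hj⟩ ⟨x, hxN, hj⟩

namespace HasDisjointSupports

variable {A : ι → Submodule F (Fin n → F)}

theorem iSupIndep (hA : HasDisjointSupports A) : iSupIndep A := fun i =>
  disjoint_of_disjoint_suppS <| by
    simp only [suppS_iSup, Set.disjoint_iUnion_right]
    exact fun k hki => hA (Ne.symm hki)

theorem eq_of_le (hA : HasDisjointSupports A) {i i' : ι} (hne : A i ≠ ⊥) (h : A i ≤ A i') :
    i = i' := by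
  by_contra hii
  exact hne ((disjoint_of_disjoint_suppS (hA hii)).eq_bot_of_le h)

theorem indicator_suppS_mem (hA : HasDisjointSupports A) (j : ι) {x : Fin n → F}
    (hx : x ∈ ⨆ i, A i) : (suppS (A j)).indicator x ∈ A j := by
  refine Submodule.iSup_induction (motive := fun y => (suppS (A j)).indicator y ∈ A j) A hx
    (fun i y hy => ?_) (by simp only [Set.indicator_zero', zero_mem])
    (fun y z hy hz => by simpa only [Set.indicator_add'] using add_mem hy hz)
  rcases eq_or_ne i j with rfl | hij
  · rwa [Set.indicator_eq_self.2 (support_subset_suppS hy)]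
  · rw [Set.indicator_eq_zero'.2 ((hA hij).mono_left (support_subset_suppS hy))]
    exact zero_mem _

theorem mem_of_support_subset (hA : HasDisjointSupports A) {j : ι} {x : Fin n → F}
    (hx : x ∈ ⨆ i, A i) (hsupp : Function.support x ⊆ suppS (A j)) : x ∈ A j :=
  Set.indicator_eq_self.2 hsupp ▸ hA.indicator_suppS_mem j hx

theorem sum_indicator_suppS [Fintype ι] (hA : HasDisjointSupports A) {x : Fin n → F}
    (hx : x ∈ ⨆ i, A i) : ∑ j, (suppS (A j)).indicator x = x := by
  funext l
  rw [Finset.sum_apply, ← Finset.indicator_biUnion_apply _ _ fun i _ j _ hij => hA hij]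
  simp only [Finset.mem_univ, Set.iUnion_true, ← suppS_iSup]
  rw [Set.indicator_eq_self.2 (support_subset_suppS hx)]

end HasDisjointSupports

end Supports

section Isometries

variable {F : Type*} [Field F] {n : ℕ} {P : PartialOrder (Fin n)}
  {S T : (Fin n → F) ≃ₗ[F] (Fin n → F)}

theorem isPIsometry_refl : IsPIsometry P (LinearEquiv.refl F (Fin n → F)) := fun _ _ => rfl

theorem IsPIsometry.trans (hS : IsPIsometry P S) (hT : IsPIsometry P T) :
    IsPIsometry P (S.trans T) := fun x y => (hT (S x) (S y)).trans (hS x y)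

theorem IsPIsometry.symm (hS : IsPIsometry P S) : IsPIsometry P S.symm := fun x y => by
  simpa using (hS (S.symm x) (S.symm y)).symm

end Isometries

section Irreducible

variable {F : Type*} [Field F] {n : ℕ} {P : PartialOrder (Fin n)} {ι : Type*}

/-- The nonzero members of the family, reindexed by `Fin r`. -/
noncomputable def Decomposition.ofHasDisjointSupports [Finite ι] {M : Submodule F (Fin n → F)}
    (A : ι → Submodule F (Fin n → F)) (hA : HasDisjointSupports A) (hM : ⨆ i, A i = M) :
    Decomposition M :=
  let e := (Finite.equivFin {i // A i ≠ ⊥}).symm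
  have hA' : HasDisjointSupports fun k => A (e k) :=
    hA.comp_of_injective (Subtype.val_injective.comp e.injective)
  { r := Nat.card {i // A i ≠ ⊥}
    D := fun k => A (e k)
    ne_bot := fun k => (e k).2
    indep := hA'.iSupIndep
    sup_eq := by
      rw [e.iSup_comp (g := fun i => A i.1), ← hM]
      refine le_antisymm (iSup_le fun i => le_iSup A i.1) (iSup_le fun i => ?_)
      by_cases hi : A i = ⊥
      · exact hi.trans_le bot_le
      · exact le_iSup_of_le ⟨i, hi⟩ le_rfl
    disj := hA' }

variable {M : Submodule F (Fin n → F)}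

theorem PIrreducible.exists_forall_ne_eq_bot (hM : PIrreducible P M) [Finite ι]
    (A : ι → Submodule F (Fin n → F)) (hA : HasDisjointSupports A) (hsup : ⨆ i, A i = M) :
    ∃ j, ∀ i ≠ j, A i = ⊥ := by
  have hcard : Nat.card {i // A i ≠ ⊥} = 1 :=
    (hM ⟨M, LinearEquiv.refl F _, isPIsometry_refl, Submodule.map_id M,
      .ofHasDisjointSupports A hA hsup⟩).1
  obtain ⟨j, hj⟩ := Nat.card_eq_one_iff_exists.1 hcard
  exact ⟨j, fun i hij => by_contra fun hi => hij (congrArg Subtype.val (hj ⟨i, hi⟩))⟩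

theorem PIrreducible.ncard_suppS_map (hM : PIrreducible P M) {S : (Fin n → F) ≃ₗ[F] (Fin n → F)}
    (hS : IsPIsometry P S) :
    (suppS (M.map (S : (Fin n → F) →ₗ[F] (Fin n → F)))).ncard = (suppS M).ncard :=
  (hM ⟨_, S, hS, rfl,
    .ofHasDisjointSupports (fun _ : Unit => _) Subsingleton.pairwise iSup_const⟩).2.1

theorem PIrreducible.map (hM : PIrreducible P M) {S : (Fin n → F) ≃ₗ[F] (Fin n → F)}
    (hS : IsPIsometry P S) : PIrreducible P (M.map (S : (Fin n → F) →ₗ[F] (Fin n → F))) := by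
  intro d
  have him : M.map ((S.trans d.T : (Fin n → F) ≃ₗ[F] (Fin n → F)) : (Fin n → F) →ₗ[F] (Fin n → F))
      = d.C' := by
    rw [LinearEquiv.coe_trans, Submodule.map_comp, d.image]
  obtain ⟨hr, hsupp, -⟩ := hM ⟨d.C', S.trans d.T, hS.trans d.isom, him, d.dec⟩
  have hcard := hM.ncard_suppS_map hS
  refine ⟨hr, hsupp.trans hcard.symm, ?_⟩
  rw [ncard_suppS_coSupp, ncard_suppS_coSupp, hsupp, hcard]

end Irreducible

section Uniqueness

variable {F : Type*} [Field F] {n : ℕ} {P : PartialOrder (Fin n)} {ι κ : Type*}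
  {A : ι → Submodule F (Fin n → F)} {B : κ → Submodule F (Fin n → F)}

/-- Restricting to the supports of the `B j` splits `A i` into the pieces `A i ⊓ B j`, which have
disjoint supports, so only one of them is nonzero. -/
theorem PIrreducible.exists_le_of_iSup_eq [Fintype κ] {i : ι} (hAi : PIrreducible P (A i))
    (hA : HasDisjointSupports A) (hB : HasDisjointSupports B) (h : ⨆ i, A i = ⨆ j, B j) :
    ∃ j, A i ≤ B j := by
  have hpieces : ⨆ j, A i ⊓ B j = A i := by
    refine le_antisymm (iSup_le fun j => inf_le_left) fun x hx => ?_
    have hxB : x ∈ ⨆ j, B j := h ▸ Submodule.mem_iSup_of_mem i hx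
    rw [← hB.sum_indicator_suppS hxB]
    refine Submodule.sum_mem _ fun j _ => Submodule.mem_iSup_of_mem j ⟨?_, ?_⟩
    · have hxj := hB.indicator_suppS_mem j hxB
      refine hA.mem_of_support_subset (h ▸ Submodule.mem_iSup_of_mem j hxj) ?_
      rw [Set.support_indicator]
      exact Set.inter_subset_right.trans (support_subset_suppS hx)
    · exact hB.indicator_suppS_mem j hxB
  obtain ⟨j, hj⟩ := hAi.exists_forall_ne_eq_bot (fun j => A i ⊓ B j)
    (fun k l hkl => (hB hkl).mono (suppS_mono inf_le_right) (suppS_mono inf_le_right)) hpieces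
  refine ⟨j, hpieces ▸ iSup_le fun k => ?_⟩
  rcases eq_or_ne k j with rfl | hkj
  exacts [inf_le_right, (hj k hkj).trans_le bot_le]

theorem exists_equiv_of_iSup_eq [Fintype ι] [Fintype κ] (hA₀ : ∀ i, A i ≠ ⊥)
    (hB₀ : ∀ j, B j ≠ ⊥) (hA : HasDisjointSupports A) (hB : HasDisjointSupports B)
    (hAirr : ∀ i, PIrreducible P (A i)) (hBirr : ∀ j, PIrreducible P (B j))
    (h : ⨆ i, A i = ⨆ j, B j) : ∃ σ : ι ≃ κ, ∀ i, A i = B (σ i) :=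
  exists_equiv_of_forall_exists_le (fun _ _ => hA.eq_of_le (hA₀ _)) (fun _ _ => hB.eq_of_le (hB₀ _))
    (fun i => (hAirr i).exists_le_of_iSup_eq hA hB h)
    (fun j => (hBirr j).exists_le_of_iSup_eq hB hA h.symm)

end Uniqueness

section Images

variable {F : Type*} [Field F] {n : ℕ} {P : PartialOrder (Fin n)} {ι : Type*} [Fintype ι]
  {A : ι → Submodule F (Fin n → F)} {M : Submodule F (Fin n → F)}
  {S : (Fin n → F) ≃ₗ[F] (Fin n → F)}

theorem sum_ncard_suppS_map (hA : HasDisjointSupports A) (hAirr : ∀ i, PIrreducible P (A i))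
    (hM : ⨆ i, A i = M) (hS : IsPIsometry P S) :
    ∑ i, (suppS ((A i).map (S : (Fin n → F) →ₗ[F] (Fin n → F)))).ncard = (suppS M).ncard := by
  rw [← hM, suppS_iSup, Set.ncard_iUnion_of_finite (fun _ => Set.toFinite _) hA,
    finsum_eq_sum_of_fintype]
  exact Finset.sum_congr rfl fun i _ => (hAirr i).ncard_suppS_map hS

theorem ncard_suppS_map_le (hA : HasDisjointSupports A) (hAirr : ∀ i, PIrreducible P (A i))
    (hM : ⨆ i, A i = M) (hS : IsPIsometry P S) :
    (suppS (M.map (S : (Fin n → F) →ₗ[F] (Fin n → F)))).ncard ≤ (suppS M).ncard := by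
  rw [← sum_ncard_suppS_map hA hAirr hM hS, ← hM, Submodule.map_iSup, suppS_iSup]
  exact Set.ncard_iUnion_le_of_fintype _

theorem HasDisjointSupports.map_of_ncard_le (hA : HasDisjointSupports A)
    (hAirr : ∀ i, PIrreducible P (A i)) (hM : ⨆ i, A i = M) (hS : IsPIsometry P S)
    (hle : (suppS M).ncard ≤ (suppS (M.map (S : (Fin n → F) →ₗ[F] (Fin n → F)))).ncard) :
    HasDisjointSupports fun i => (A i).map (S : (Fin n → F) →ₗ[F] (Fin n → F)) := by
  refine Set.pairwise_disjoint_of_sum_ncard_le _ ?_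
  rw [sum_ncard_suppS_map hA hAirr hM hS, ← suppS_iSup, ← Submodule.map_iSup, hM]
  exact hle

end Images

theorem isometry_permutes_components_general {F : Type*} [Field F] {n : ℕ}
    (P : PartialOrder (Fin n)) (C : Submodule F (Fin n → F))
    (d' d'' : PDecomposition P C) (h' : d'.IsMaximal) (h'' : d''.IsMaximal)
    (T : (Fin n → F) ≃ₗ[F] (Fin n → F)) (hT : IsPIsometry P T)
    (hTC : Submodule.map (T : (Fin n → F) →ₗ[F] (Fin n → F)) d'.C' = d''.C') :
    ∃ σ : Fin d'.dec.r ≃ Fin d''.dec.r, ∀ i,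
      Submodule.map (T : (Fin n → F) →ₗ[F] (Fin n → F)) (d'.dec.D i) = d''.dec.D (σ i) := by
  have hle : (suppS d'.C').ncard ≤ (suppS d''.C').ncard := by
    have := ncard_suppS_map_le d''.dec.disj h'' d''.dec.sup_eq hT.symm
    rwa [(Submodule.map_symm_eq_iff T).2 hTC] at this
  have hdisj := HasDisjointSupports.map_of_ncard_le d'.dec.disj h' d'.dec.sup_eq hT (hTC ▸ hle)
  refine exists_equiv_of_iSup_eq (fun i => ?_) d''.dec.ne_bot hdisj d''.dec.disj
    (fun i => (h' i).map hT) h'' ?_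
  · exact Submodule.map_eq_bot_iff.not.2 (d'.dec.ne_bot i)
  · rw [← Submodule.map_iSup, d'.dec.sup_eq, hTC, d''.dec.sup_eq]

/-- **Corollary.** If `C'` and `C''` are two maximal
`P`-decompositions of `C` and `T ∈ GL_P(n)` is a linear `P`-isometry with
`T(C') = C''`, then there is a permutation `σ` of the component indices such that
`T(C'_i) = C''_{σ(i)}` for every `i`. -/
theorem isometry_permutes_components {F : Type*} [Field F] [Fintype F] {n : ℕ}
    (P : PartialOrder (Fin n)) (C : Submodule F (Fin n → F))
    (d' d'' : PDecomposition P C) (h' : d'.IsMaximal) (h'' : d''.IsMaximal)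
    (T : (Fin n → F) ≃ₗ[F] (Fin n → F)) (hT : IsPIsometry P T)
    (hTC : Submodule.map (T : (Fin n → F) →ₗ[F] (Fin n → F)) d'.C' = d''.C') :
    ∃ σ : Fin d'.dec.r ≃ Fin d''.dec.r, ∀ i,
      Submodule.map (T : (Fin n → F) →ₗ[F] (Fin n → F)) (d'.dec.D i) = d''.dec.D (σ i) :=
  isometry_permutes_components_general P C d' d'' h' h'' T hT hTC
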